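/- arXiv:1305.7223 — 2 statements merged into one kernel-verified Lean document; each statement's English description precedes it below -/
import Mathlib

section
/- Let F be the free group on m₂, m₃, m₄ and MF its Milnor group. Then the element [[m₃, m₄·m₂⁻¹]·[m₂⁻¹, m₄], m₂·m₃·m₄] of MF is trivial. -/
/-- Milnor relators: commutators of two conjugates of the same generator. -/
def milnorRelators (n : ℕ) : Set (FreeGroup (Fin n)) :=
  {w | ∃ (i : Fin n) (x y : FreeGroup (Fin n)),
    w = (x⁻¹ * FreeGroup.of i * x)⁻¹ * (y⁻¹ * FreeGroup.of i * y)⁻¹ *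
        (x⁻¹ * FreeGroup.of i * x) * (y⁻¹ * FreeGroup.of i * y)}

/-- The free Milnor group on `n` generators. -/
def MilnorGroup (n : ℕ) : Type :=
  FreeGroup (Fin n) ⧸ Subgroup.normalClosure (milnorRelators n)

noncomputable instance (n : ℕ) : Group (MilnorGroup n) :=
  QuotientGroup.Quotient.group _

/-- The commutator `[a,b] = a⁻¹b⁻¹ab`. -/
def c {G : Type*} [Group G] (a b : G) : G := a⁻¹ * b⁻¹ * a * b

section Key

variable {G : Type*} [Group G]

private lemma conj_id {a t : G} (h : Commute a t) : a⁻¹ * t * a = t := by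
  rw [mul_assoc, ← h.eq, inv_mul_cancel_left]

private lemma conj_id' {a t : G} (h : Commute a t) : a * t * a⁻¹ = t := by
  rw [h.eq, mul_inv_cancel_right]

lemma key (A B C : G)
    (hA : ∀ x y : G, Commute (x⁻¹*A*x) (y⁻¹*A*y))
    (hB : ∀ x y : G, Commute (x⁻¹*B*x) (y⁻¹*B*y))
    (hC : ∀ x y : G, Commute (x⁻¹*C*x) (y⁻¹*C*y)) :
    c (c A (B*C⁻¹) * c C⁻¹ B) (C*A*B) = 1 := by
  have hA1 : ∀ y : G, Commute A (y⁻¹*A*y) := fun y => by simpa using hA 1 y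
  have hB1 : ∀ y : G, Commute B (y⁻¹*B*y) := fun y => by simpa using hB 1 y
  have hC1 : ∀ y : G, Commute C (y⁻¹*C*y) := fun y => by simpa using hC 1 y
  -- basic commutation facts
  have f1 : Commute A ((C⁻¹*A*C)⁻¹*(B⁻¹*A*B)) := (hA1 C).inv_right.mul_right (hA1 B)
  have f2 : Commute C (c C⁻¹ B) := by
    have e : c C⁻¹ B = C * (B⁻¹*C*B)⁻¹ := by simp only [c]; group
    rw [e]; exact (Commute.refl C).mul_right (hC1 B).inv_right
  have f3 : Commute B (A⁻¹ * c C⁻¹ B * A) := by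
    have e : A⁻¹ * c C⁻¹ B * A = ((C⁻¹*A)⁻¹*B*(C⁻¹*A))⁻¹ * (A⁻¹*B*A) := by
      simp only [c]; group
    rw [e]; exact (hB1 (C⁻¹*A)).inv_right.mul_right (hB1 A)
  have f4 : Commute C (c A C⁻¹) := by
    have e : c A C⁻¹ = (A⁻¹*C*A) * C⁻¹ := by simp only [c]; group
    rw [e]; exact (hC1 A).mul_right (Commute.refl C).inv_right
  have f5 : Commute B (c A B) := by
    have e : c A B = (A⁻¹*B*A)⁻¹ * B := by simp only [c]; group
    rw [e]; exact (hB1 A).inv_right.mul_right (Commute.refl B)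
  have f6 : Commute C (c (c A B) C) := by
    have e : c (c A B) C = ((c A B)⁻¹*C*(c A B))⁻¹ * C := by simp only [c]; group
    rw [e]; exact (hC1 (c A B)).inv_right.mul_right (Commute.refl C)
  have commB_Z2 : ∀ x : G, Commute (x⁻¹*B*x) (c (c A C⁻¹) B) := by
    intro x
    have e : c (c A C⁻¹) B = ((c A C⁻¹)⁻¹*B*(c A C⁻¹))⁻¹ * B := by simp only [c]; group
    rw [e]; exact (hB x (c A C⁻¹)).inv_right.mul_right (by simpa using hB x 1)
  have commBZ2 : Commute B (c (c A C⁻¹) B) := by simpa using commB_Z2 1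
  have commZ2p : Commute (c (c A C⁻¹) B) (c A B) := by
    have e : c A B = (A⁻¹*B*A)⁻¹ * B := by simp only [c]; group
    rw [e]; exact ((commB_Z2 A).symm.inv_right).mul_right commBZ2.symm
  have commZ1Z2 : Commute (c (c A B) C) (c (c A C⁻¹) B) := by
    have e : c (c A B) C = B⁻¹ * (A⁻¹*B*A) * ((A*C)⁻¹*B*(A*C))⁻¹ * (C⁻¹*B*C) := by
      simp only [c]; group
    rw [e]
    exact ((commBZ2.inv_left.mul_left (commB_Z2 A)).mul_left
      (commB_Z2 (A*C)).inv_left).mul_left (commB_Z2 C)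
  have commC_Z3 : ∀ x : G, Commute (x⁻¹*C*x) (c (c C⁻¹ B) A) := by
    intro x
    have e : c (c C⁻¹ B) A = (B⁻¹*C*B) * C⁻¹ * (A⁻¹*C*A) * ((B*A)⁻¹*C*(B*A))⁻¹ := by
      simp only [c]; group
    rw [e]
    exact (((hC x B).mul_right (by simpa using hC x 1 : Commute (x⁻¹*C*x) C).inv_right).mul_right
      (hC x A)).mul_right (hC x (B*A)).inv_right
  have commCZ3 : Commute C (c (c C⁻¹ B) A) := by simpa using commC_Z3 1
  have commbZ3 : Commute (c C⁻¹ B) (c (c C⁻¹ B) A) := by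
    have e : c C⁻¹ B = C * (B⁻¹*C*B)⁻¹ := by simp only [c]; group
    have h := commCZ3.mul_left (commC_Z3 B).inv_left
    rwa [← e] at h
  have commBZ1 : Commute B (c (c A B) C) := by
    have e : c (c A B) C = B⁻¹ * (A⁻¹*B*A) * ((A*C)⁻¹*B*(A*C))⁻¹ * (C⁻¹*B*C) := by
      simp only [c]; group
    rw [e]
    exact (((Commute.refl B).inv_right.mul_right (hB1 A)).mul_right
      (hB1 (A*C)).inv_right).mul_right (hB1 C)
  have commBb : Commute B (c C⁻¹ B) := by
    have e : c C⁻¹ B = ((C⁻¹)⁻¹*B*C⁻¹)⁻¹ * B := by simp only [c]; group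
    rw [e]; exact (hB1 C⁻¹).inv_right.mul_right (Commute.refl B)
  have commAr : Commute A (c A C) := by
    have e : c A C = A⁻¹ * (C⁻¹*A*C) := by simp only [c]; group
    rw [e]; exact (Commute.refl A).inv_right.mul_right (hA1 C)
  have commCr : Commute C (c A C) := by
    have e : c A C = (A⁻¹*C*A)⁻¹ * C := by simp only [c]; group
    rw [e]; exact (hC1 A).inv_right.mul_right (Commute.refl C)
  have commBZ : Commute B (c (c A C) B) := by
    have e : c (c A C) B = ((c A C)⁻¹*B*(c A C))⁻¹ * B := by simp only [c]; group
    rw [e]; exact (hB1 (c A C)).inv_right.mul_right (Commute.refl B)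
  have commA_Z : ∀ x : G, Commute (x⁻¹*A*x) (c (c A C) B) := by
    intro x
    have e : c (c A C) B = (C⁻¹*A*C)⁻¹ * A * (B⁻¹*A*B)⁻¹ * ((C*B)⁻¹*A*(C*B)) := by
      simp only [c]; group
    rw [e]
    exact (((hA x C).inv_right.mul_right (by simpa using hA x 1)).mul_right
      (hA x B).inv_right).mul_right (hA x (C*B))
  have commAZ : Commute A (c (c A C) B) := by simpa using commA_Z 1
  have commrZ : Commute (c A C) (c (c A C) B) := by
    have e : c A C = A⁻¹ * (C⁻¹*A*C) := by simp only [c]; group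
    have h := commAZ.inv_left.mul_left (commA_Z C)
    rwa [← e] at h
  -- Step 1
  have h1 : A⁻¹ * (C⁻¹ * c A (B*C⁻¹) * C) * A = C⁻¹ * c A (B*C⁻¹) * C := by
    have e : C⁻¹ * c A (B*C⁻¹) * C = (C⁻¹*A*C)⁻¹*(B⁻¹*A*B) := by simp only [c]; group
    rw [e]; exact conj_id f1
  have E1 : (C*A*B)⁻¹ * c A (B*C⁻¹) * (C*A*B) = (C*B)⁻¹ * c A (B*C⁻¹) * (C*B) := by
    calc (C*A*B)⁻¹ * c A (B*C⁻¹) * (C*A*B)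
        = B⁻¹ * (A⁻¹ * (C⁻¹ * c A (B*C⁻¹) * C) * A) * B := by group
      _ = B⁻¹ * (C⁻¹ * c A (B*C⁻¹) * C) * B := by rw [h1]
      _ = (C*B)⁻¹ * c A (B*C⁻¹) * (C*B) := by group
  -- Step 2
  have E2 : (C*A*B)⁻¹ * c C⁻¹ B * (C*A*B) = A⁻¹ * c C⁻¹ B * A := by
    calc (C*A*B)⁻¹ * c C⁻¹ B * (C*A*B)
        = B⁻¹ * (A⁻¹ * (C⁻¹ * c C⁻¹ B * C) * A) * B := by group
      _ = B⁻¹ * (A⁻¹ * c C⁻¹ B * A) * B := by rw [conj_id f2]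
      _ = A⁻¹ * c C⁻¹ B * A := conj_id f3
  -- Step 3
  have h3d' : C * (c (c A B) C)⁻¹ * C⁻¹ = (c (c A B) C)⁻¹ := conj_id' f6.inv_right
  have ea : c A (B*C⁻¹) = c A C⁻¹ * (c A B * (c (c A B) C)⁻¹) := by
    have e0 : c A (B*C⁻¹) = c A C⁻¹ * (c A B * (C * (c (c A B) C)⁻¹ * C⁻¹)) := by
      simp only [c]; group
    rw [e0, h3d']
  have E3 : (C*B)⁻¹ * c A (B*C⁻¹) * (C*B)
      = c A (B*C⁻¹) * c (c A C⁻¹) B * c (c A B) C := by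
    have h3c : B⁻¹ * c A C⁻¹ * B = c A C⁻¹ * c (c A C⁻¹) B := by simp only [c]; group
    calc (C*B)⁻¹ * c A (B*C⁻¹) * (C*B)
        = (B⁻¹*(C⁻¹ * c A C⁻¹ * C)*B) * (B⁻¹ * c A B * B) := by simp only [c]; group
      _ = (B⁻¹ * c A C⁻¹ * B) * (B⁻¹ * c A B * B) := by rw [conj_id f4]
      _ = (B⁻¹ * c A C⁻¹ * B) * c A B := by rw [conj_id f5]
      _ = (c A C⁻¹ * c (c A C⁻¹) B) * c A B := by rw [h3c]
      _ = c A C⁻¹ * (c (c A C⁻¹) B * c A B) := by group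
      _ = c A C⁻¹ * (c A B * c (c A C⁻¹) B) := by rw [commZ2p.eq]
      _ = c A C⁻¹ * (c A B * ((c (c A B) C)⁻¹ * c (c A C⁻¹) B * c (c A B) C)) := by
          rw [conj_id commZ1Z2]
      _ = (c A C⁻¹ * (c A B * (c (c A B) C)⁻¹)) * c (c A C⁻¹) B * c (c A B) C := by group
      _ = c A (B*C⁻¹) * c (c A C⁻¹) B * c (c A B) C := by rw [← ea]
  -- Step 4
  have E4 : A⁻¹ * c C⁻¹ B * A = c C⁻¹ B * c (c C⁻¹ B) A := by simp only [c]; group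
  -- Jacobi via Hall–Witt
  have HW : (B * c (c A B) C * B⁻¹) * (C⁻¹ * c (c B⁻¹ C⁻¹) A * C) *
      (A⁻¹ * c (c C A⁻¹) B⁻¹ * A) = 1 := by simp only [c]; group
  have tb : c B⁻¹ C⁻¹ = c C⁻¹ B := by
    have e : c B⁻¹ C⁻¹ = B * c C⁻¹ B * B⁻¹ := by simp only [c]; group
    rw [e, conj_id' commBb]
  have tr : c C A⁻¹ = c A C := by
    have e : c C A⁻¹ = A * c A C * A⁻¹ := by simp only [c]; group
    rw [e, conj_id' commAr]
  have tZ : c (c A C) B⁻¹ = (c (c A C) B)⁻¹ := by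
    have e : c (c A C) B⁻¹ = B * (c (c A C) B)⁻¹ * B⁻¹ := by simp only [c]; group
    rw [e, conj_id' commBZ.inv_right]
  have eqq : c A C⁻¹ = (c A C)⁻¹ := by
    have e : c A C⁻¹ = C * (c A C)⁻¹ * C⁻¹ := by simp only [c]; group
    rw [e, conj_id' commCr.inv_right]
  have eZ2 : c (c A C⁻¹) B = (c (c A C) B)⁻¹ := by
    rw [eqq]
    have e : c ((c A C)⁻¹) B = (c A C) * (c (c A C) B)⁻¹ * (c A C)⁻¹ := by
      simp only [c]; group
    rw [e, conj_id' commrZ.inv_right]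
  have J : c (c A B) C * c (c C⁻¹ B) A * (c (c A C) B)⁻¹ = 1 := by
    have h := HW
    rw [conj_id' commBZ1, tb, conj_id commCZ3, tr, tZ, conj_id commAZ.inv_right] at h
    exact h
  have h2 : c (c A B) C * c (c C⁻¹ B) A = c (c A C) B := mul_inv_eq_one.mp J
  have J' : c (c A C⁻¹) B * c (c A B) C * c (c C⁻¹ B) A = 1 := by
    rw [eZ2, mul_assoc, h2]; group
  -- final assembly
  have key_h : (C*A*B)⁻¹ * (c A (B*C⁻¹) * c C⁻¹ B) * (C*A*B)
      = c A (B*C⁻¹) * c C⁻¹ B := by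
    calc (C*A*B)⁻¹ * (c A (B*C⁻¹) * c C⁻¹ B) * (C*A*B)
        = ((C*A*B)⁻¹ * c A (B*C⁻¹) * (C*A*B)) * ((C*A*B)⁻¹ * c C⁻¹ B * (C*A*B)) := by
          group
      _ = ((C*B)⁻¹ * c A (B*C⁻¹) * (C*B)) * (A⁻¹ * c C⁻¹ B * A) := by rw [E1, E2]
      _ = (c A (B*C⁻¹) * c (c A C⁻¹) B * c (c A B) C) * (c C⁻¹ B * c (c C⁻¹ B) A) := by
          rw [E3, E4]
      _ = c A (B*C⁻¹) * (c (c A C⁻¹) B * c (c A B) C * c (c C⁻¹ B) A) * c C⁻¹ B := by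
          rw [commbZ3.eq]; group
      _ = c A (B*C⁻¹) * 1 * c C⁻¹ B := by rw [J']
      _ = c A (B*C⁻¹) * c C⁻¹ B := by group
  have final : c (c A (B*C⁻¹) * c C⁻¹ B) (C*A*B)
      = (c A (B*C⁻¹) * c C⁻¹ B)⁻¹ *
        ((C*A*B)⁻¹ * (c A (B*C⁻¹) * c C⁻¹ B) * (C*A*B)) := by
    simp only [c]; group
  rw [final, key_h]; group

end Key

lemma milnor_conj_comm (n : ℕ) (i : Fin n)
    (x y : FreeGroup (Fin n) ⧸ Subgroup.normalClosure (milnorRelators n)) :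
    Commute (x⁻¹ * QuotientGroup.mk (FreeGroup.of i) * x)
      (y⁻¹ * QuotientGroup.mk (FreeGroup.of i) * y) := by
  obtain ⟨a, rfl⟩ := QuotientGroup.mk_surjective x
  obtain ⟨b, rfl⟩ := QuotientGroup.mk_surjective y
  show _ * _ = _ * _
  simp only [← QuotientGroup.mk_inv, ← QuotientGroup.mk_mul]
  rw [QuotientGroup.eq]
  apply Subgroup.subset_normalClosure
  refine ⟨i, b, a, ?_⟩
  group

/-- In the free Milnor group on generators `m₂, m₃, m₄` (indexed by `0, 1, 2`),
the element `[[m₃, m₄·m₂⁻¹]·[m₂⁻¹, m₄], m₂·m₃·m₄]` is trivial. -/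
theorem hopf_link_element_trivial_in_milnor :
    letI m : Fin 3 → MilnorGroup 3 :=
      fun i => QuotientGroup.mk (FreeGroup.of i)
    c (c (m 1) (m 2 * (m 0)⁻¹) * c ((m 0)⁻¹) (m 2)) (m 0 * m 1 * m 2) = 1 := by
  exact key _ _ _ (fun x y => milnor_conj_comm 3 1 x y)
    (fun x y => milnor_conj_comm 3 2 x y) (fun x y => milnor_conj_comm 3 0 x y)
end

section
/- Let MF be the Milnor group on generators m₂, m₃, m₄ and let γ₃ denote the third term of its lower central series. Then any element of γ₃ is central in MF; in particular, for any w ∈ γ₃ and any g ∈ MF, g⁻¹wg = w. -/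
/-!
If all conjugates of a generator `s` commute, its normal closure `N` is abelian, and `G ⧸ N` is
generated by the remaining generators. Inducting on the number `k + 1` of generators,
`γ_{k+1}(G ⧸ N) = 1`, so every `w ∈ γ_{k+1}(G)` lies in `N` and commutes with `s`. Commuting
with every generator, `w` is central, whence `γ_{k+2}(G) = 1`. The Milnor relators say exactly
that the generators of the Milnor group have commuting conjugates.
-/

open Subgroup
open scoped commutatorElement

section

variable {G H : Type*} [Group G] [Group H]

theorem isMulCommutative_normalClosure_singleton {s : G}
    (h : ∀ x y : G, Commute (x⁻¹ * s * x) (y⁻¹ * s * y)) :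
    IsMulCommutative (normalClosure ({s} : Set G)) := by
  have hconj : ∀ t ∈ Group.conjugatesOfSet ({s} : Set G), ∃ x : G, t = x⁻¹ * s * x := by
    intro t ht
    obtain ⟨_, rfl, hst⟩ := Group.mem_conjugatesOfSet_iff.mp ht
    obtain ⟨c, rfl⟩ := isConj_iff.mp hst
    exact ⟨c⁻¹, by group⟩
  refine isMulCommutative_closure fun t ht u hu => ?_
  obtain ⟨x, rfl⟩ := hconj t ht
  obtain ⟨y, rfl⟩ := hconj u hu
  exact h x y

theorem isMulCommutative_normalClosure_singleton_map {f : G →* H}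
    (hf : Function.Surjective f) {s : G} [IsMulCommutative (normalClosure ({s} : Set G))] :
    IsMulCommutative (normalClosure ({f s} : Set H)) := by
  rw [← Set.image_singleton, ← map_normalClosure _ f hf]
  infer_instance

theorem closure_image_diff_singleton_eq_top {f : G →* H} (hf : Function.Surjective f)
    {S : Set G} (hS : closure S = ⊤) {s : G} (hs : f s = 1) :
    closure (f '' (S \ {s})) = ⊤ := by
  rw [eq_top_iff, ← map_top_of_surjective f hf, ← hS, MonoidHom.map_closure, closure_le]
  rintro _ ⟨t, ht, rfl⟩
  by_cases hts : t = s
  · rw [hts, hs]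
    exact one_mem _
  · exact subset_closure ⟨t, ⟨ht, hts⟩, rfl⟩

theorem mem_center_of_forall_commute {S : Set G} (hS : closure S = ⊤) {w : G}
    (hw : ∀ s ∈ S, Commute w s) : w ∈ center G := by
  rw [center_eq_iInf hS]
  simp only [mem_iInf, mem_centralizer_singleton_iff]
  exact fun s hs => (hw s hs).eq

theorem top_lowerCentralSeries_le_center_iff (n : ℕ) :
    (⊤ : Subgroup G).lowerCentralSeries n ≤ center G ↔
      (⊤ : Subgroup G).lowerCentralSeries (n + 1) = ⊥ := by
  refine ⟨Subgroup.lowerCentralSeries_succ_eq_bot ⊤,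
    fun h w hw => mem_center_iff.mpr fun g => ?_⟩
  have hwg : ⁅w, g⁆ ∈ (⊤ : Subgroup G).lowerCentralSeries (n + 1) :=
    commutator_mem_commutator hw (mem_top g)
  rw [h, mem_bot, commutatorElement_eq_one_iff_mul_comm] at hwg
  exact hwg.symm

theorem mem_top_lowerCentralSeries_map (f : G →* H) (n : ℕ) {w : G}
    (hw : w ∈ (⊤ : Subgroup G).lowerCentralSeries n) :
    f w ∈ (⊤ : Subgroup H).lowerCentralSeries n := by
  have hmap : f w ∈ ((⊤ : Subgroup G).lowerCentralSeries n).map f := mem_map_of_mem f hw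
  rw [map_lowerCentralSeries] at hmap
  exact lowerCentralSeries_mono n le_top hmap

end

theorem top_lowerCentralSeries_eq_bot_of_card_le {G : Type*} [Group G] (S : Finset G)
    (hS : closure (S : Set G) = ⊤)
    (hcomm : ∀ s ∈ S, IsMulCommutative (normalClosure ({s} : Set G)))
    {n : ℕ} (hcard : S.card ≤ n) : (⊤ : Subgroup G).lowerCentralSeries n = ⊥ := by
  induction n generalizing G with
  | zero =>
    obtain rfl : S = ∅ := Finset.card_eq_zero.mp (Nat.le_zero.mp hcard)
    simpa [eq_comm] using hS
  | succ n ih =>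
    classical
    rw [← top_lowerCentralSeries_le_center_iff]
    intro w hw
    refine mem_center_of_forall_commute hS fun s hs => ?_
    set N := normalClosure ({s} : Set G)
    let π := QuotientGroup.mk' N
    have hπ : Function.Surjective π := QuotientGroup.mk'_surjective N
    have hquot : (⊤ : Subgroup (G ⧸ N)).lowerCentralSeries n = ⊥ := by
      refine ih ((S.erase s).image π) ?_ ?_ ?_
      · rw [Finset.coe_image, Finset.coe_erase]
        exact closure_image_diff_singleton_eq_top hπ hS
          ((QuotientGroup.eq_one_iff s).mpr (subset_normalClosure rfl))
      · simp only [Finset.mem_image]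
        rintro _ ⟨u, hu, rfl⟩
        have := hcomm u (Finset.mem_of_mem_erase hu)
        exact isMulCommutative_normalClosure_singleton_map hπ
      · calc ((S.erase s).image π).card ≤ (S.erase s).card := Finset.card_image_le
          _ = S.card - 1 := Finset.card_erase_of_mem hs
          _ ≤ n := by omega
    have hwN : w ∈ N := by
      rw [← QuotientGroup.eq_one_iff, ← mem_bot, ← hquot]
      exact mem_top_lowerCentralSeries_map π n hw
    have := hcomm s hs
    exact setLike_mul_comm hwN (subset_normalClosure rfl)

namespace MilnorGroup

variable {n : ℕ}

noncomputable def mk : FreeGroup (Fin n) →* MilnorGroup n := QuotientGroup.mk' _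

noncomputable def of (i : Fin n) : MilnorGroup n := mk (FreeGroup.of i)

theorem mk_surjective : Function.Surjective (mk (n := n)) := QuotientGroup.mk'_surjective _

theorem closure_range_of : closure (Set.range (of (n := n))) = ⊤ := by
  change closure (Set.range (mk ∘ FreeGroup.of)) = ⊤
  rw [Set.range_comp, ← MonoidHom.map_closure, FreeGroup.closure_range_of,
    map_top_of_surjective _ mk_surjective]

theorem commute_conj_of (i : Fin n) (x y : MilnorGroup n) :
    Commute (x⁻¹ * of i * x) (y⁻¹ * of i * y) := by
  obtain ⟨x, rfl⟩ := mk_surjective x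
  obtain ⟨y, rfl⟩ := mk_surjective y
  set a := x⁻¹ * FreeGroup.of i * x
  set b := y⁻¹ * FreeGroup.of i * y
  have hrel : mk (a⁻¹ * b⁻¹ * a * b) = 1 :=
    (QuotientGroup.eq_one_iff _).mpr (subset_normalClosure ⟨i, x, y, rfl⟩)
  have hab : mk a * mk b = mk b * mk a := by
    calc mk a * mk b = mk b * mk a * mk (a⁻¹ * b⁻¹ * a * b) := by
          simp only [map_mul, map_inv]
          group
      _ = mk b * mk a := by rw [hrel, mul_one]
  simpa [a, b, of, commute_iff_eq] using hab

theorem top_lowerCentralSeries_eq_bot :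
    (⊤ : Subgroup (MilnorGroup n)).lowerCentralSeries n = ⊥ := by
  classical
  refine top_lowerCentralSeries_eq_bot_of_card_le (Finset.univ.image of) ?_ ?_ ?_
  · simpa using closure_range_of
  · simp only [Finset.mem_image]
    rintro _ ⟨i, -, rfl⟩
    exact isMulCommutative_normalClosure_singleton (commute_conj_of i)
  · simpa using Finset.card_image_le (s := Finset.univ) (f := of)

end MilnorGroup

/-- `lowerCentralSeries _ 2` is `γ₃`, as the series starts at
`lowerCentralSeries _ 0 = ⊤ = γ₁`. -/
theorem gamma3_central_in_milnor (w : MilnorGroup 3)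
    (hw : w ∈ (⊤ : Subgroup (MilnorGroup 3)).lowerCentralSeries 2) (g : MilnorGroup 3) :
    g⁻¹ * w * g = w := by
  have hcentral : w ∈ center (MilnorGroup 3) :=
    (top_lowerCentralSeries_le_center_iff 2).mpr MilnorGroup.top_lowerCentralSeries_eq_bot hw
  rw [mul_assoc, ← mem_center_iff.mp hcentral g, inv_mul_cancel_left]
end
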